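/- Let 0 ≤ t < s, z > 0, k ∈ ℝ and a > 0. Let G be a Gaussian random variable with mean 0 and variance s − t, and set Z := z · exp(−(r + γ²/2)(s − t) − γG). Then E[Z^k · 1_{Z > a}] = z^k · exp(−k(r + γ²/2)(s − t) + (k²γ²/2)(s − t)) · Φ(d̄(a) + kγ√(s − t)). -/
import Mathlib


open MeasureTheory ProbabilityTheory
open scoped NNReal ENNReal

/-- Cumulative distribution function of the standard normal distribution. -/
noncomputable def Phi (x : ℝ) : ℝ := ((gaussianReal 0 1) (Set.Iic x)).toReal

/-- `d̄(x) = (ln(z/x) − (r + γ²/2)(s − t)) / (γ √(s − t))`. -/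
noncomputable def dbar (γ r s t z x : ℝ) : ℝ :=
  (Real.log (z / x) - (r + γ ^ 2 / 2) * (s - t)) / (γ * Real.sqrt (s - t))

lemma toNNReal_ne_zero_of_pos {v : ℝ} (hv : 0 < v) : Real.toNNReal v ≠ 0 := by
  simp [Real.toNNReal_eq_zero, not_le, hv]

/-- CDF of N(0,v) in terms of Phi. -/
lemma gaussian_Iic_eq_Phi (v : ℝ) (hv : 0 < v) (y : ℝ) :
    ((gaussianReal 0 v.toNNReal) (Set.Iic y)).toReal = Phi (y / Real.sqrt v) := by
  have hs : (0:ℝ) < Real.sqrt v := Real.sqrt_pos.mpr hv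
  have hmap : (gaussianReal 0 1).map (fun x => Real.sqrt v * x) = gaussianReal 0 v.toNNReal := by
    rw [gaussianReal_map_const_mul (μ := 0) (v := 1) (Real.sqrt v), mul_zero]
    congr 1
    exact NNReal.coe_injective (by
      simp [mul_one, Real.sq_sqrt hv.le, Real.coe_toNNReal _ hv.le])
  rw [← hmap, Measure.map_apply (by fun_prop) measurableSet_Iic]
  have hpre : (fun x => Real.sqrt v * x) ⁻¹' Set.Iic y = Set.Iic (y / Real.sqrt v) := by
    ext x
    simp [Set.mem_Iic, ← le_div_iff₀' hs]
  rw [hpre, Phi]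

/-- Shifting the mean of a Gaussian. -/
lemma gaussian_Iio_shift (v : ℝ≥0) (m c : ℝ) :
    gaussianReal m v (Set.Iio c) = gaussianReal 0 v (Set.Iio (c - m)) := by
  have hmap : (gaussianReal 0 v).map (· + m) = gaussianReal m v := by
    simpa using gaussianReal_map_add_const (μ := 0) (v := v) m
  rw [← hmap, Measure.map_apply (measurable_add_const m) measurableSet_Iio]
  congr 1
  ext x
  simp [lt_sub_iff_add_lt]

/-- Key Gaussian integral: `∫ e^{bx} 1_{x < c} dN(0,v)`. -/
lemma gaussian_exp_indicator_integral (v : ℝ) (hv : 0 < v) (b c : ℝ) :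
    (∫ x, Real.exp (b * x) * Set.indicator (Set.Iio c) (fun _ => (1:ℝ)) x
        ∂(gaussianReal 0 (Real.toNNReal v)))
      = Real.exp (b ^ 2 * v / 2) * Phi ((c - b * v) / Real.sqrt v) := by
  have hv' : Real.toNNReal v ≠ 0 := toNNReal_ne_zero_of_pos hv
  have hvc : ((Real.toNNReal v : ℝ≥0) : ℝ) = v := Real.coe_toNNReal _ hv.le
  rw [gaussianReal_of_var_ne_zero 0 hv']
  have hmeas : Measurable fun x => (gaussianPDFReal 0 (Real.toNNReal v) x).toNNReal :=
    (measurable_gaussianPDFReal _ _).real_toNNReal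
  have hpdf_eq : gaussianPDF 0 (Real.toNNReal v)
      = fun x => ((gaussianPDFReal 0 (Real.toNNReal v) x).toNNReal : ℝ≥0∞) := rfl
  rw [hpdf_eq, integral_withDensity_eq_integral_smul hmeas]
  have key : ∀ x, (gaussianPDFReal 0 (Real.toNNReal v) x).toNNReal •
        (Real.exp (b * x) * Set.indicator (Set.Iio c) (fun _ => (1:ℝ)) x)
      = Real.exp (b ^ 2 * v / 2) *
        Set.indicator (Set.Iio c) (fun y => gaussianPDFReal (b * v) (Real.toNNReal v) y) x := by
    intro x
    rw [NNReal.smul_def, Real.coe_toNNReal _ (gaussianPDFReal_nonneg _ _ _)]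
    by_cases hx : x ∈ Set.Iio c
    · simp only [Set.indicator_of_mem hx]
      rw [mul_one]
      unfold gaussianPDFReal
      rw [hvc]
      have hE : Real.exp (-(x - 0) ^ 2 / (2 * v)) * Real.exp (b * x)
          = Real.exp (b ^ 2 * v / 2) * Real.exp (-(x - b * v) ^ 2 / (2 * v)) := by
        rw [← Real.exp_add, ← Real.exp_add]
        congr 1
        field_simp
        ring
      rw [smul_eq_mul, mul_assoc, hE]
      ring
    · simp [Set.indicator_of_notMem hx]
  rw [MeasureTheory.integral_congr_ae (Filter.Eventually.of_forall key),
    MeasureTheory.integral_const_mul, MeasureTheory.integral_indicator measurableSet_Iio]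
  congr 1
  have hnn : 0 ≤ ∫ x in Set.Iio c, gaussianPDFReal (b * v) (Real.toNNReal v) x := by
    apply setIntegral_nonneg measurableSet_Iio
    exact fun x _ => gaussianPDFReal_nonneg _ _ _
  have := gaussianReal_apply_eq_integral (b * v) hv' (Set.Iio c)
  have hInt : (∫ x in Set.Iio c, gaussianPDFReal (b * v) (Real.toNNReal v) x)
      = ((gaussianReal (b * v) (Real.toNNReal v)) (Set.Iio c)).toReal := by
    rw [this, ENNReal.toReal_ofReal hnn]
  rw [hInt, gaussian_Iio_shift]
  rw [measure_congr (MeasureTheory.Iio_ae_eq_Iic' (μ := gaussianReal 0 (Real.toNNReal v))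
    (a := c - b * v) (gaussianReal_absolutelyContinuous 0 hv' (Real.volume_singleton)))]
  exact gaussian_Iic_eq_Phi v hv (c - b * v)

theorem expectation_power_pricing_kernel_above_level
    (γ r t s z k a : ℝ) (hγ : 0 < γ) (hr : 0 < r)
    (ht : 0 ≤ t) (hts : t < s) (hz : 0 < z) (ha : 0 < a) :
    (∫ w, (z * Real.exp (-(r + γ ^ 2 / 2) * (s - t) - γ * w)) ^ k *
        Set.indicator (Set.Ioi a) (fun _ => (1 : ℝ))
          (z * Real.exp (-(r + γ ^ 2 / 2) * (s - t) - γ * w))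
        ∂(gaussianReal 0 (Real.toNNReal (s - t))))
      = z ^ k * Real.exp (-k * (r + γ ^ 2 / 2) * (s - t) + k ^ 2 * γ ^ 2 / 2 * (s - t)) *
        Phi (dbar γ r s t z a + k * γ * Real.sqrt (s - t)) := by
  set τ : ℝ := s - t with hτ
  have hτ0 : 0 < τ := by simp [hτ]; linarith
  have hsτ : (0:ℝ) < Real.sqrt τ := Real.sqrt_pos.mpr hτ0
  set μ : ℝ := r + γ ^ 2 / 2 with hμ
  set cbar : ℝ := (Real.log (z / a) - μ * τ) / γ with hcbar
  have hpt : ∀ w : ℝ,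
      (z * Real.exp (-μ * τ - γ * w)) ^ k *
        Set.indicator (Set.Ioi a) (fun _ => (1 : ℝ)) (z * Real.exp (-μ * τ - γ * w))
      = (z ^ k * Real.exp (-(k * μ * τ))) *
          (Real.exp ((-(k * γ)) * w) * Set.indicator (Set.Iio cbar) (fun _ => (1:ℝ)) w) := by
    intro w
    have h1 : (z * Real.exp (-μ * τ - γ * w)) ^ k
        = z ^ k * Real.exp (-(k * μ * τ)) * Real.exp ((-(k * γ)) * w) := by
      rw [Real.mul_rpow hz.le (Real.exp_nonneg _), ← Real.exp_mul, mul_assoc, ← Real.exp_add]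
      ring_nf
    have h2 : Set.indicator (Set.Ioi a) (fun _ => (1 : ℝ)) (z * Real.exp (-μ * τ - γ * w))
        = Set.indicator (Set.Iio cbar) (fun _ => (1:ℝ)) w := by
      have hiff : z * Real.exp (-μ * τ - γ * w) ∈ Set.Ioi a ↔ w ∈ Set.Iio cbar := by
        simp only [Set.mem_Ioi, Set.mem_Iio]
        rw [show z * Real.exp (-μ * τ - γ * w) = Real.exp (-μ * τ - γ * w) * z by ring,
          ← div_lt_iff₀ hz, ← Real.log_lt_iff_lt_exp (by positivity),
          Real.log_div ha.ne' hz.ne']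
        rw [hcbar, lt_div_iff₀ hγ, Real.log_div hz.ne' ha.ne']
        constructor <;> intro h <;> linarith
      by_cases hw : w ∈ Set.Iio cbar
      · rw [Set.indicator_of_mem hw, Set.indicator_of_mem (hiff.mpr hw)]
      · rw [Set.indicator_of_notMem hw, Set.indicator_of_notMem (fun h => hw (hiff.mp h))]
    rw [h1, h2]
    ring
  rw [MeasureTheory.integral_congr_ae (Filter.Eventually.of_forall hpt),
    MeasureTheory.integral_const_mul,
    gaussian_exp_indicator_integral τ hτ0 (-(k * γ)) cbar]
  have harg : (cbar - (-(k * γ)) * τ) / Real.sqrt τ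
      = dbar γ r s t z a + k * γ * Real.sqrt τ := by
    have hc2 : cbar = dbar γ r s t z a * Real.sqrt τ := by
      rw [hcbar, dbar, ← hτ, ← hμ]
      field_simp
    rw [hc2, div_eq_iff hsτ.ne']
    have hss : Real.sqrt τ * Real.sqrt τ = τ := Real.mul_self_sqrt hτ0.le
    linear_combination (-(k * γ)) * hss
  rw [harg, ← mul_assoc, mul_assoc (z ^ k), ← Real.exp_add]
  congr 2
  ring
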